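/- For every k > 0 and ρ ∈ (0,1), the function g_{k,ρ} is strictly increasing on ℝ, tends to 0 as x → −∞, and tends to +∞ as x → +∞; consequently, for every c > 0 there exists a unique x ∈ ℝ with g_{k,ρ}(x) = c. -/

import Mathlib

open MeasureTheory Real Set Filter

/-- Standard normal density. -/
noncomputable def stdPhi (x : ℝ) : ℝ := (Real.sqrt (2 * Real.pi))⁻¹ * Real.exp (-x ^ 2 / 2)

/-- Standard normal CDF. -/
noncomputable def stdPhiCDF (x : ℝ) : ℝ := ∫ u in Set.Iic x, stdPhi u

/-- Normalized expected-profit function `g_{k,ρ}`. -/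
noncomputable def gkr (k ρ x : ℝ) : ℝ :=
  Real.exp (k * x + k ^ 2 * (1 - ρ ^ 2) / 2) *
      stdPhiCDF ((x + k * (1 - ρ ^ 2)) / Real.sqrt (1 - ρ ^ 2)) -
    stdPhiCDF (x / Real.sqrt (1 - ρ ^ 2))

/-!
The Gaussian tilting identity `exp (k x + k² s² / 2) φ ((x + k s²) / s) = φ (x / s)`, with
`s = √(1 - ρ²)`, makes the two density terms cancel when `g` is differentiated, leaving
`g' x = k exp (k x + k² s² / 2) Φ ((x + k s²) / s) > 0`. The limits follow from `0 < Φ ≤ 1`,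
`Φ → 0` at `-∞` and `exp (k x) → 0, ∞`; the unique root is then the intermediate value
theorem.
-/

open ProbabilityTheory Topology

theorem hasDerivAt_integral_Iic {E : Type*} [NormedAddCommGroup E] [NormedSpace ℝ E]
    [CompleteSpace E] {f : ℝ → E} {x : ℝ} (hf : Integrable f) (hfx : ContinuousAt f x) :
    HasDerivAt (fun y => ∫ t in Iic y, f t) (f x) x := by
  have hsplit : (fun y => ∫ t in Iic y, f t) =
      fun y => (∫ t in Iic 0, f t) + ∫ t in 0..y, f t := by
    ext y
    rw [← intervalIntegral.integral_Iic_sub_Iic hf.integrableOn hf.integrableOn]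
    abel
  rw [hsplit]
  exact (intervalIntegral.integral_hasDerivAt_right hf.intervalIntegrable
    hf.aestronglyMeasurable.stronglyMeasurableAtFilter hfx).const_add _

theorem StrictMono.existsUnique_eq_of_tendsto {α β : Type*}
    [ConditionallyCompleteLinearOrder α] [TopologicalSpace α] [OrderTopology α]
    [DenselyOrdered α] [Nonempty α] [LinearOrder β] [TopologicalSpace β] [OrderClosedTopology β]
    [NoMaxOrder β]
    {f : α → β} (hf : StrictMono f) (hcont : Continuous f) {a c : β}
    (hbot : Tendsto f atBot (𝓝 a)) (htop : Tendsto f atTop atTop) (hac : a < c) :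
    ∃! x, f x = c := by
  obtain ⟨lo, hlo⟩ := (hbot.eventually_lt_const hac).exists
  obtain ⟨hi, hhi⟩ := (htop.eventually_gt_atTop c).exists
  obtain ⟨x, -, hx⟩ := intermediate_value_Icc (hf.lt_iff_lt.1 (hlo.trans hhi)).le
    hcont.continuousOn ⟨hlo.le, hhi.le⟩
  exact ⟨x, hx, fun y hy => hf.injective (hy.trans hx.symm)⟩

lemma stdPhi_eq_gaussianPDFReal : stdPhi = gaussianPDFReal 0 1 := by
  ext x
  simp [stdPhi, gaussianPDFReal]

lemma stdPhi_pos (x : ℝ) : 0 < stdPhi x := by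
  rw [stdPhi_eq_gaussianPDFReal]
  exact gaussianPDFReal_pos _ _ _ one_ne_zero

lemma integrable_stdPhi : Integrable stdPhi := by
  rw [stdPhi_eq_gaussianPDFReal]
  exact integrable_gaussianPDFReal _ _

lemma stdPhiCDF_eq_cdf : stdPhiCDF = cdf (gaussianReal 0 1) := by
  ext x
  rw [cdf_eq_real, measureReal_def, gaussianReal_apply_eq_integral _ one_ne_zero,
    ENNReal.toReal_ofReal
      (setIntegral_nonneg measurableSet_Iic fun y _ => gaussianPDFReal_nonneg _ _ y),
    stdPhiCDF, stdPhi_eq_gaussianPDFReal]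

lemma hasDerivAt_stdPhiCDF (x : ℝ) : HasDerivAt stdPhiCDF (stdPhi x) x :=
  hasDerivAt_integral_Iic integrable_stdPhi (by unfold stdPhi; fun_prop)

lemma stdPhiCDF_pos (x : ℝ) : 0 < stdPhiCDF x := by
  rw [stdPhiCDF, setIntegral_pos_iff_support_of_nonneg_ae
    (ae_of_all _ fun y => (stdPhi_pos y).le) integrable_stdPhi.integrableOn]
  simp [Function.support_eq_univ fun y => (stdPhi_pos y).ne']

lemma stdPhiCDF_le_one (x : ℝ) : stdPhiCDF x ≤ 1 := by
  rw [stdPhiCDF_eq_cdf]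
  exact cdf_le_one _ x

lemma monotone_stdPhiCDF : Monotone stdPhiCDF := by
  rw [stdPhiCDF_eq_cdf]
  exact monotone_cdf _

lemma tendsto_stdPhiCDF_atBot : Tendsto stdPhiCDF atBot (𝓝 0) := by
  rw [stdPhiCDF_eq_cdf]
  exact tendsto_cdf_atBot _

lemma exp_mul_stdPhi_shift (k : ℝ) {s : ℝ} (hs : s ≠ 0) (x : ℝ) :
    exp (k * x + k ^ 2 * s ^ 2 / 2) * stdPhi ((x + k * s ^ 2) / s) = stdPhi (x / s) := by
  rw [stdPhi, stdPhi, mul_left_comm, ← exp_add]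
  congr 2
  field_simp
  ring

noncomputable def gaussGap (k s x : ℝ) : ℝ :=
  exp (k * x + k ^ 2 * s ^ 2 / 2) * stdPhiCDF ((x + k * s ^ 2) / s) - stdPhiCDF (x / s)

lemma gkr_eq_gaussGap {ρ : ℝ} (hρ : ρ ^ 2 ≤ 1) (k : ℝ) :
    gkr k ρ = gaussGap k √(1 - ρ ^ 2) := by
  ext x
  rw [gkr, gaussGap, sq_sqrt (by linarith)]

section gaussGap

variable {k s : ℝ}

lemma hasDerivAt_gaussGap (hs : s ≠ 0) (x : ℝ) :
    HasDerivAt (gaussGap k s)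
      (k * exp (k * x + k ^ 2 * s ^ 2 / 2) * stdPhiCDF ((x + k * s ^ 2) / s)) x := by
  have hlin : HasDerivAt (fun x => k * x + k ^ 2 * s ^ 2 / 2) k x := by
    simpa using ((hasDerivAt_id x).const_mul k).add_const (k ^ 2 * s ^ 2 / 2)
  have hshift : HasDerivAt (fun x => (x + k * s ^ 2) / s) (1 / s) x :=
    ((hasDerivAt_id x).add_const _).div_const s
  have hscale : HasDerivAt (fun x => x / s) (1 / s) x := (hasDerivAt_id x).div_const s
  refine ((hlin.exp.mul ((hasDerivAt_stdPhiCDF _).comp x hshift)).sub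
    ((hasDerivAt_stdPhiCDF _).comp x hscale)).congr_deriv ?_
  rw [Function.comp_apply, ← exp_mul_stdPhi_shift k hs x]
  ring

lemma strictMono_gaussGap (hk : 0 < k) (hs : s ≠ 0) : StrictMono (gaussGap k s) :=
  strictMono_of_deriv_pos fun x => by
    rw [(hasDerivAt_gaussGap hs x).deriv]
    exact mul_pos (mul_pos hk (exp_pos _)) (stdPhiCDF_pos _)

lemma continuous_gaussGap (hs : s ≠ 0) : Continuous (gaussGap k s) :=
  continuous_iff_continuousAt.2 fun x => (hasDerivAt_gaussGap hs x).continuousAt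

lemma tendsto_exp_affine_atBot (hk : 0 < k) (b : ℝ) :
    Tendsto (fun x => exp (k * x + b)) atBot (𝓝 0) :=
  tendsto_exp_atBot.comp (tendsto_atBot_add_const_right _ _ (tendsto_id.const_mul_atBot hk))

lemma tendsto_exp_affine_atTop (hk : 0 < k) (b : ℝ) :
    Tendsto (fun x => exp (k * x + b)) atTop atTop :=
  tendsto_exp_atTop.comp (tendsto_atTop_add_const_right _ _ (tendsto_id.const_mul_atTop hk))

lemma tendsto_gaussGap_atBot (hk : 0 < k) (hs : 0 < s) : Tendsto (gaussGap k s) atBot (𝓝 0) := by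
  have hfirst : Tendsto
      (fun x => exp (k * x + k ^ 2 * s ^ 2 / 2) * stdPhiCDF ((x + k * s ^ 2) / s)) atBot (𝓝 0) :=
    squeeze_zero (fun x => mul_nonneg (exp_pos _).le (stdPhiCDF_pos _).le)
      (fun x => mul_le_of_le_one_right (exp_pos _).le (stdPhiCDF_le_one _))
      (tendsto_exp_affine_atBot hk _)
  have hsecond : Tendsto (fun x => stdPhiCDF (x / s)) atBot (𝓝 0) :=
    tendsto_stdPhiCDF_atBot.comp (tendsto_id.atBot_div_const hs)
  have hdiff := hfirst.sub hsecond
  rwa [sub_zero] at hdiff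

lemma tendsto_gaussGap_atTop (hk : 0 < k) (hs : 0 < s) : Tendsto (gaussGap k s) atTop atTop := by
  have hlower : Tendsto (fun x => exp (k * x + k ^ 2 * s ^ 2 / 2) * stdPhiCDF 0 - 1) atTop atTop :=
    tendsto_atTop_add_const_right _ _
      ((tendsto_exp_affine_atTop hk _).atTop_mul_const (stdPhiCDF_pos 0))
  refine tendsto_atTop_mono' _ ?_ hlower
  filter_upwards [eventually_ge_atTop 0] with x hx
  have hΦ : stdPhiCDF 0 ≤ stdPhiCDF ((x + k * s ^ 2) / s) := monotone_stdPhiCDF (by positivity)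
  have hΦ_le_one := stdPhiCDF_le_one (x / s)
  rw [gaussGap]
  gcongr

end gaussGap

theorem gkr_strictMono_tendsto_unique_root
    (k ρ : ℝ) (hk : 0 < k) (hρ : ρ ∈ Set.Ioo (0 : ℝ) 1) :
    StrictMono (gkr k ρ) ∧
    Filter.Tendsto (gkr k ρ) Filter.atBot (nhds 0) ∧
    Filter.Tendsto (gkr k ρ) Filter.atTop Filter.atTop ∧
    (∀ c : ℝ, 0 < c → ∃! x : ℝ, gkr k ρ x = c) := by
  obtain ⟨hρ0, hρ1⟩ := hρ
  have hρsq : ρ ^ 2 < 1 := by nlinarith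
  have hs : 0 < √(1 - ρ ^ 2) := sqrt_pos.2 (by linarith)
  rw [gkr_eq_gaussGap hρsq.le]
  have hmono := strictMono_gaussGap hk hs.ne'
  have hbot := tendsto_gaussGap_atBot hk hs
  have htop := tendsto_gaussGap_atTop hk hs
  exact ⟨hmono, hbot, htop,
    fun c hc => hmono.existsUnique_eq_of_tendsto (continuous_gaussGap hs.ne') hbot htop hc⟩
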